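/- Every skeleton φ of a strategy σ on a justified AJM game A satisfies Functional Determinacy (sab ∈ φ and sac ∈ φ imply b = c) and Functional Representation Independence (sab ∈ φ, t ∈ φ, and sa ≈_A ta' imply there is a unique b' with ta'b' ∈ φ and sab ≈_A ta'b'). -/

import Mathlib

/- Justified AJM games, after Abramsky's game semantics for access control. -/

namespace AJM

inductive Pol where
  | P
  | O
deriving DecidableEq

inductive QA where
  | Q
  | Ans
deriving DecidableEq

def Pol.flip : Pol → Pol
  | .P => .O
  | .O => .P

/-- Well-bracketed strings over moves (condition (p4)). -/
inductive WB {M : Type} (lab : M → Pol × QA) (just : M → Option M) : List M → Prop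
  | nil : WB lab just []
  | wrap (a q : M) (u : List M) : (lab a).2 = QA.Ans → just a = some q →
      WB lab just u → WB lab just (q :: (u ++ [a]))
  | append (u v : List M) : WB lab just u → WB lab just v → WB lab just (u ++ v)

/-- Conditions (p1)–(p5): Opponent starts, alternation, linearity,
well-bracketing, justifiers occur before their moves. -/
def ValidSeq {M : Type} (lab : M → Pol × QA) (just : M → Option M) (s : List M) : Prop :=
  (∀ m, s.head? = some m → (lab m).1 = Pol.O) ∧
  List.Chain' (fun m m' => (lab m).1 ≠ (lab m').1) s ∧
  s.Nodup ∧
  (∃ t, s <+: t ∧ WB lab just t) ∧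
  (∀ s₁ m s₂, s = s₁ ++ m :: s₂ → ∀ m', just m = some m' → m' ∈ s₁)

/-- A justified AJM game (the data). -/
structure Game where
  M : Type
  lab : M → Pol × QA
  just : M → Option M
  pos : Set (List M)
  equiv : List M → List M → Prop

namespace Game

/-- The axioms making the data of a `Game` an actual justified AJM game. -/
structure Valid (A : Game) : Prop where
  just_wf : WellFounded fun m m' : A.M => A.just m' = some m
  just_pol : ∀ m m', A.just m = some m' → (A.lab m).1 ≠ (A.lab m').1
  just_qa : ∀ m m', A.just m = some m' → (A.lab m).2 = QA.Ans → (A.lab m').2 = QA.Q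
  ans_justified : ∀ m, (A.lab m).2 = QA.Ans → A.just m ≠ none
  pos_nonempty : A.pos.Nonempty
  pos_prefix_closed : ∀ s t : List A.M, s <+: t → t ∈ A.pos → s ∈ A.pos
  pos_valid : ∀ s ∈ A.pos, ValidSeq A.lab A.just s
  equiv_mem : ∀ s t, A.equiv s t → s ∈ A.pos ∧ t ∈ A.pos
  equiv_refl : ∀ s ∈ A.pos, A.equiv s s
  equiv_symm : ∀ s t, A.equiv s t → A.equiv t s
  equiv_trans : ∀ s t u, A.equiv s t → A.equiv t u → A.equiv s u
  equiv_lab : ∀ s t, A.equiv s t → s.map A.lab = t.map A.lab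
  equiv_prefix : ∀ s t s' t', A.equiv s t → s' <+: s → t' <+: t →
      s'.length = t'.length → A.equiv s' t'
  equiv_ext : ∀ s t a, A.equiv s t → s ++ [a] ∈ A.pos → ∃ b, A.equiv (s ++ [a]) (t ++ [b])

/-- A strategy on a game: a non-empty set of even-length positions that is
causally consistent, representation independent and deterministic. -/
structure IsStrategy (A : Game) (σ : Set (List A.M)) : Prop where
  subset_pos : σ ⊆ A.pos
  even_length : ∀ s ∈ σ, Even s.length
  nonempty : σ.Nonempty
  causal : ∀ s a b, s ++ [a, b] ∈ σ → s ∈ σ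
  repind : ∀ s t, s ∈ σ → A.equiv s t → t ∈ σ
  det : ∀ s t a b a' b', s ++ [a, b] ∈ σ → t ++ [a', b'] ∈ σ →
      A.equiv (s ++ [a]) (t ++ [a']) → A.equiv (s ++ [a, b]) (t ++ [a', b'])

/-- A skeleton of a strategy `σ`: a non-empty, causally consistent subset of
`σ` satisfying Uniformization. -/
structure IsSkeletonOf (A : Game) (φ σ : Set (List A.M)) : Prop where
  nonempty : φ.Nonempty
  subset : φ ⊆ σ
  causal : ∀ s a b, s ++ [a, b] ∈ φ → s ∈ φ
  uniformization : ∀ s a b, s ++ [a, b] ∈ σ → s ∈ φ → ∃! b', s ++ [a, b'] ∈ φ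

/-- A skeleton in the abstract sense (independently of any strategy):
a non-empty, causally consistent set of even-length positions satisfying
Functional Determinacy and Functional Representation Independence. -/
structure IsSkeleton (A : Game) (φ : Set (List A.M)) : Prop where
  subset_pos : φ ⊆ A.pos
  even_length : ∀ s ∈ φ, Even s.length
  nonempty : φ.Nonempty
  causal : ∀ s a b, s ++ [a, b] ∈ φ → s ∈ φ
  funDet : ∀ s a b c, s ++ [a, b] ∈ φ → s ++ [a, c] ∈ φ → b = c
  funRepInd : ∀ s t a b a', s ++ [a, b] ∈ φ → t ∈ φ →
      A.equiv (s ++ [a]) (t ++ [a']) →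
      ∃! b', t ++ [a', b'] ∈ φ ∧ A.equiv (s ++ [a, b]) (t ++ [a', b'])

/-- `φ• = { t | ∃ s ∈ φ, s ≈_A t }`, the saturation of `φ` under `≈_A`. -/
def dot (A : Game) (φ : Set (List A.M)) : Set (List A.M) :=
  {t | ∃ s ∈ φ, A.equiv s t}

/-- The preorder `φ ⊑ ψ` on skeletons. -/
def Subeq (A : Game) (φ ψ : Set (List A.M)) : Prop :=
  ∀ s a b s' a', s ++ [a, b] ∈ φ → s' ∈ ψ → A.equiv (s ++ [a]) (s' ++ [a']) →
    ∃ b', s' ++ [a', b'] ∈ ψ ∧ A.equiv (s ++ [a, b]) (s' ++ [a', b'])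

end Game

end AJM

namespace AJM.Game

variable {A : Game} {σ φ : Set (List A.M)}

theorem IsSkeletonOf.funDet (hφ : IsSkeletonOf A φ σ) {s : List A.M} {a b c : A.M}
    (hb : s ++ [a, b] ∈ φ) (hc : s ++ [a, c] ∈ φ) : b = c :=
  (hφ.uniformization s a b (hφ.subset hb) (hφ.causal s a b hb)).unique hb hc

theorem IsStrategy.exists_response_of_equiv (hA : A.Valid) (hσ : IsStrategy A σ)
    {s t : List A.M} {a b a' : A.M} (hsab : s ++ [a, b] ∈ σ)
    (heq : A.equiv (s ++ [a]) (t ++ [a'])) : ∃ c, t ++ [a', c] ∈ σ := by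
  have hsab' : s ++ [a] ++ [b] ∈ σ := by simpa using hsab
  obtain ⟨c, hc⟩ := hA.equiv_ext _ _ b heq (hσ.subset_pos hsab')
  exact ⟨c, by simpa using hσ.repind _ _ hsab' hc⟩

theorem IsSkeletonOf.funRepInd (hA : A.Valid) (hσ : IsStrategy A σ)
    (hφ : IsSkeletonOf A φ σ) {s t : List A.M} {a b a' : A.M} (hsab : s ++ [a, b] ∈ φ)
    (ht : t ∈ φ) (heq : A.equiv (s ++ [a]) (t ++ [a'])) :
    ∃! b', t ++ [a', b'] ∈ φ ∧ A.equiv (s ++ [a, b]) (t ++ [a', b']) := by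
  obtain ⟨c, hc⟩ := hσ.exists_response_of_equiv hA (hφ.subset hsab) heq
  obtain ⟨b', hb', huniq⟩ := hφ.uniformization t a' c hc ht
  exact ⟨b', ⟨hb', hσ.det s t a b a' b' (hφ.subset hsab) (hφ.subset hb') heq⟩,
    fun y hy => huniq y hy.1⟩

end AJM.Game

open AJM Game in
/-- Every skeleton of a strategy satisfies Functional Determinacy and
Functional Representation Independence. -/
theorem skeleton_funDet_funRepInd (A : Game) (hA : A.Valid)
    (σ φ : Set (List A.M)) (hσ : IsStrategy A σ) (hφ : IsSkeletonOf A φ σ) :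
    (∀ s a b c, s ++ [a, b] ∈ φ → s ++ [a, c] ∈ φ → b = c) ∧
    (∀ s t a b a', s ++ [a, b] ∈ φ → t ∈ φ →
      A.equiv (s ++ [a]) (t ++ [a']) →
      ∃! b', t ++ [a', b'] ∈ φ ∧ A.equiv (s ++ [a, b]) (t ++ [a', b'])) :=
  ⟨fun _ _ _ _ hb hc => hφ.funDet hb hc,
    fun _ _ _ _ _ hsab ht heq => hφ.funRepInd hA hσ hsab ht heq⟩
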